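/- Let m ≥ 3 and let q ∈ ℂ be a primitive m-th root of unity. Let λ ∈ ℂ, λ ≠ 0, and α, β ∈ ℂ be such that c_p = (p)_q·(λ² q^{1−p} − λ^{−2} q^{p−1})/(q − q^{−1}) + αβ ≠ 0 for every integer 1 ≤ p ≤ m−1. Then M(λ, α, β) is an irreducible representation of U_q(sl(2)) of dimension m: the only linear subspaces of ℂ^m invariant under its three matrices K, E, F are {0} and ℂ^m. -/

import Mathlib

/-!
`K` is diagonal with eigenvalues `λ q^{-p}`, pairwise distinct because `q` is a primitive `m`-th
root of unity, while `E` and `F` shift the basis cyclically down and up. This gives the two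
conjugation relations, and makes `EF` and `FE` diagonal with entries `c_{p+1}` and `c_p`, where
`c_0 = c_m = αβ` closes the cycle; `c_{p+1} - c_p = (K² - K⁻²)_{pp}/(q - q⁻¹)` is then an identity
of Laurent polynomials in `q^p`.

For irreducibility, Lagrange interpolation in the eigenvalues of `K` shows that a nonzero invariant
subspace contains some `v_p`. Since every `c_p` with `1 ≤ p ≤ m - 1` is nonzero, `E` lowers it
to `v_0`, and `F` then produces all of `v_0, …, v_{m-1}`.
-/

open Matrix

noncomputable section

/-- The q-integer `(p)_q = (q^p - q^{-p})/(q - q⁻¹)`. -/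
def qint (q : ℂ) (p : ℤ) : ℂ := (q ^ p - q ^ (-p)) / (q - q⁻¹)

/-- A representation of `U_q(sl(2))` of dimension `N`: a triple `(K, E, F)` of `N×N`
complex matrices with `K` invertible satisfying the defining relations. -/
def IsRep (q : ℂ) {N : ℕ} (K E F : Matrix (Fin N) (Fin N) ℂ) : Prop :=
  IsUnit K ∧
  K * E * K⁻¹ = q • E ∧
  K * F * K⁻¹ = q⁻¹ • F ∧
  E * F - F * E = (q - q⁻¹)⁻¹ • (K ^ 2 - K⁻¹ ^ 2)

/-- A subspace invariant under the three matrices `K`, `E`, `F`. -/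
def InvariantSub {N : ℕ} (K E F : Matrix (Fin N) (Fin N) ℂ)
    (W : Submodule ℂ (Fin N → ℂ)) : Prop :=
  (∀ v ∈ W, K.mulVec v ∈ W) ∧ (∀ v ∈ W, E.mulVec v ∈ W) ∧ (∀ v ∈ W, F.mulVec v ∈ W)

/-- An irreducible representation of `U_q(sl(2))` of dimension `N`. -/
def IsIrrep (q : ℂ) {N : ℕ} (K E F : Matrix (Fin N) (Fin N) ℂ) : Prop :=
  IsRep q K E F ∧ 1 ≤ N ∧
  ∀ W : Submodule ℂ (Fin N → ℂ), InvariantSub K E F W → W = ⊥ ∨ W = ⊤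

/-- The coefficient `c_p = (p)_q(λ² q^{1−p} − λ⁻² q^{p−1})/(q − q⁻¹) + αβ`. -/
def cCoeff (q lam α β : ℂ) (p : ℕ) : ℂ :=
  qint q p *
    ((lam ^ 2 * q ^ (1 - (p : ℤ)) - (lam⁻¹) ^ 2 * q ^ ((p : ℤ) - 1)) / (q - q⁻¹)) +
  α * β

/-- The `K` matrix of the module `M(λ, α, β)`: `K·v_p = λ q^{-p} v_p`. -/
def MK (q lam : ℂ) (m : ℕ) : Matrix (Fin m) (Fin m) ℂ :=
  Matrix.diagonal fun p => lam * q ^ (-(p : ℤ))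

/-- The `F` matrix of `M(λ, α, β)`: `F·v_p = v_{p+1}` for `p ≤ m−2`, `F·v_{m−1} = α·v_0`. -/
def MF (α : ℂ) (m : ℕ) : Matrix (Fin m) (Fin m) ℂ :=
  Matrix.of fun i j =>
    if (i : ℕ) = (j : ℕ) + 1 then 1
    else if (j : ℕ) = m - 1 ∧ (i : ℕ) = 0 then α
    else 0

/-- The `E` matrix of `M(λ, α, β)`: `E·v_0 = β·v_{m−1}` and `E·v_p = c_p·v_{p−1}`
for `1 ≤ p ≤ m−1`. -/
def ME (q lam α β : ℂ) (m : ℕ) : Matrix (Fin m) (Fin m) ℂ :=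
  Matrix.of fun i j =>
    if (j : ℕ) = (i : ℕ) + 1 then cCoeff q lam α β (j : ℕ)
    else if (j : ℕ) = 0 ∧ (i : ℕ) = m - 1 then β
    else 0

theorem mulVec_single_apply {ι R : Type*} [Fintype ι] [DecidableEq ι]
    [NonUnitalNonAssocSemiring R] (A : Matrix ι ι R) (i j : ι) (x : R) :
    (A *ᵥ Pi.single j x) i = A i j * x := by
  simp [mulVec_single]

section Diagonal

variable {ι K : Type*} [Fintype ι] [DecidableEq ι] [Field K] {d : ι → K}

theorem inv_diagonal_eq_diagonal_inv (hd : ∀ i, d i ≠ 0) : (diagonal d)⁻¹ = diagonal d⁻¹ :=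
  inv_eq_left_inv <| by
    rw [diagonal_mul_diagonal, ← diagonal_one]
    exact congrArg diagonal (funext fun i => inv_mul_cancel₀ (hd i))

theorem diagonal_mul_mul_inv_diagonal_eq_smul (hd : ∀ i, d i ≠ 0) {A : Matrix ι ι K} {c : K}
    (hA : ∀ i j, A i j ≠ 0 → d i = c * d j) : diagonal d * A * (diagonal d)⁻¹ = c • A := by
  ext i j
  rw [inv_diagonal_eq_diagonal_inv hd, mul_diagonal, diagonal_mul, Matrix.smul_apply, smul_eq_mul,
    Pi.inv_apply]
  by_cases h : A i j = 0
  · simp [h]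
  · rw [hA i j h]
    field_simp [hd j]

end Diagonal

section Invariant

variable {ι K : Type*} [DecidableEq ι] [Field K] {W : Submodule K (ι → K)}

theorem Submodule.single_mem_iff_single_one_mem {i : ι} {c : K} (hc : c ≠ 0) :
    Pi.single i c ∈ W ↔ Pi.single i 1 ∈ W := by
  rw [← W.smul_mem_iff hc (x := Pi.single i 1), ← Pi.single_smul', smul_eq_mul, mul_one]

theorem Submodule.eq_top_of_forall_single_mem [Finite ι] (h : ∀ i, Pi.single i 1 ∈ W) : W = ⊤ := by
  rw [eq_top_iff, ← (Pi.basisFun K ι).span_eq, Submodule.span_le]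
  rintro _ ⟨i, rfl⟩
  simpa using h i

theorem Submodule.exists_single_mem_of_diagonal_mulVec_mem [Fintype ι] {d : ι → K}
    (hd : Function.Injective d) (hW : ∀ v ∈ W, diagonal d *ᵥ v ∈ W) (hne : W ≠ ⊥) :
    ∃ p, Pi.single p 1 ∈ W := by
  obtain ⟨w, hw, hw0⟩ := W.ne_bot_iff.mp hne
  obtain ⟨p, hp⟩ := Function.ne_iff.mp hw0
  have hprod : ∀ S : Finset ι, (fun i => (∏ j ∈ S, (d i - d j)) * w i) ∈ W := by
    intro S
    induction S using Finset.induction_on with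
    | empty => simpa using hw
    | insert a S ha ih =>
      convert W.sub_mem (hW _ ih) (W.smul_mem (d a) ih) using 1
      ext i
      simp only [Finset.prod_insert ha, mulVec_diagonal, Pi.sub_apply, Pi.smul_apply, smul_eq_mul]
      ring
  have hsingle : (fun i => (∏ j ∈ Finset.univ.erase p, (d i - d j)) * w i) =
      Pi.single p ((∏ j ∈ Finset.univ.erase p, (d p - d j)) * w p) := by
    ext i
    by_cases hip : i = p
    · subst hip
      simp
    · rw [Finset.prod_eq_zero (Finset.mem_erase.mpr ⟨hip, Finset.mem_univ i⟩) (sub_self (d i))]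
      simp [hip]
  have hcoeff : (∏ j ∈ Finset.univ.erase p, (d p - d j)) * w p ≠ 0 :=
    mul_ne_zero (Finset.prod_ne_zero_iff.mpr fun j hj =>
      sub_ne_zero.mpr (hd.ne (Finset.ne_of_mem_erase hj).symm)) hp
  exact ⟨p, (W.single_mem_iff_single_one_mem hcoeff).mp (hsingle ▸ hprod _)⟩

end Invariant

section Module

variable {q lam α β : ℂ} {m n : ℕ}

theorem cCoeff_succ_sub_cCoeff (hq0 : q ≠ 0) (hq : q - q⁻¹ ≠ 0) (p : ℕ) :
    cCoeff q lam α β (p + 1) - cCoeff q lam α β p =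
      (q - q⁻¹)⁻¹ * ((lam * q ^ (-(p : ℤ))) ^ 2 - (lam * q ^ (-(p : ℤ)))⁻¹ ^ 2) := by
  have hq' : q ^ 2 - 1 ≠ 0 := by
    contrapose! hq
    field_simp
    linear_combination hq
  simp only [cCoeff, qint, Nat.cast_succ, zpow_sub₀ hq0, zpow_add₀ hq0, _root_.zpow_neg, zpow_one,
    zpow_natCast]
  field_simp
  ring

theorem weight_eq_mul_weight_of_cyclic_succ (hq0 : q ≠ 0) (hqm : q ^ m = 1) {i j : Fin m}
    (h : (j : ℕ) = i + 1 ∨ (j : ℕ) = 0 ∧ (i : ℕ) = m - 1) :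
    lam * q ^ (-(i : ℤ)) = q * (lam * q ^ (-(j : ℤ))) := by
  have hi := i.isLt
  rcases h with h | ⟨hj, hi'⟩
  · rw [h, Nat.cast_succ, neg_add, zpow_add₀ hq0, _root_.zpow_neg_one]
    field_simp
  · rw [hj, hi', Nat.cast_sub (by omega), Nat.cast_one, neg_sub, zpow_sub₀ hq0, zpow_natCast, hqm]
    simp [mul_comm]

theorem cyclic_succ_of_ME_ne_zero {i j : Fin m} (h : ME q lam α β m i j ≠ 0) :
    (j : ℕ) = i + 1 ∨ (j : ℕ) = 0 ∧ (i : ℕ) = m - 1 := by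
  simp only [ME, of_apply] at h
  split_ifs at h with h₁ h₂
  exacts [Or.inl h₁, Or.inr h₂, absurd rfl h]

theorem cyclic_succ_of_MF_ne_zero {i j : Fin m} (h : MF α m i j ≠ 0) :
    (i : ℕ) = j + 1 ∨ (i : ℕ) = 0 ∧ (j : ℕ) = m - 1 := by
  simp only [MF, of_apply] at h
  split_ifs at h with h₁ h₂
  exacts [Or.inl h₁, Or.inr h₂.symm, absurd rfl h]

theorem MF_mulVec_single_castSucc (i : Fin n) (x : ℂ) :
    MF α (n + 1) *ᵥ Pi.single i.castSucc x = Pi.single i.succ x := by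
  ext k
  simp only [mulVec_single_apply, MF, of_apply, Pi.single_apply, Fin.ext_iff]
  grind

theorem MF_mulVec_single_last (x : ℂ) :
    MF α (n + 1) *ᵥ Pi.single (Fin.last n) x = Pi.single 0 (α * x) := by
  ext k
  simp only [mulVec_single_apply, MF, of_apply, Pi.single_apply, Fin.ext_iff]
  grind

theorem ME_mulVec_single_succ (i : Fin n) (x : ℂ) :
    ME q lam α β (n + 1) *ᵥ Pi.single i.succ x =
      Pi.single i.castSucc (cCoeff q lam α β (i + 1) * x) := by
  ext k
  simp only [mulVec_single_apply, ME, of_apply, Pi.single_apply, Fin.ext_iff]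
  grind

theorem ME_mulVec_single_zero (x : ℂ) :
    ME q lam α β (n + 1) *ᵥ Pi.single 0 x = Pi.single (Fin.last n) (β * x) := by
  ext k
  simp only [mulVec_single_apply, ME, of_apply, Pi.single_apply, Fin.ext_iff]
  grind

theorem cCoeff_eq_of_pow_eq_one {p : ℕ} (hp : q ^ p = 1) : cCoeff q lam α β p = α * β := by
  simp [cCoeff, qint, hp]

theorem ME_mul_MF (hq : q ^ (n + 1) = 1) :
    ME q lam α β (n + 1) * MF α (n + 1) =
      diagonal fun p : Fin (n + 1) => cCoeff q lam α β ((p : ℕ) + 1) := by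
  refine ext_of_mulVec_single fun p => ?_
  rw [← mulVec_mulVec, diagonal_mulVec_single]
  induction p using Fin.lastCases with
  | last =>
    rw [MF_mulVec_single_last, ME_mulVec_single_zero, Fin.val_last, cCoeff_eq_of_pow_eq_one hq]
    congr 1
    ring
  | cast i => rw [MF_mulVec_single_castSucc, ME_mulVec_single_succ, Fin.val_castSucc]

theorem MF_mul_ME :
    MF α (n + 1) * ME q lam α β (n + 1) = diagonal fun p : Fin (n + 1) => cCoeff q lam α β p := by
  refine ext_of_mulVec_single fun p => ?_
  rw [← mulVec_mulVec, diagonal_mulVec_single]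
  induction p using Fin.cases with
  | zero =>
    rw [ME_mulVec_single_zero, MF_mulVec_single_last, Fin.val_zero,
      cCoeff_eq_of_pow_eq_one (pow_zero q)]
    congr 1
    ring
  | succ i => rw [ME_mulVec_single_succ, MF_mulVec_single_castSucc, Fin.val_succ]

theorem isRep_MK_ME_MF (hqm : q ^ (n + 1) = 1) (hq2 : q ^ 2 ≠ 1) (hlam : lam ≠ 0) :
    IsRep q (MK q lam (n + 1)) (ME q lam α β (n + 1)) (MF α (n + 1)) := by
  have hq0 : q ≠ 0 := by
    rintro rfl
    simp at hqm
  have hqq : q - q⁻¹ ≠ 0 := by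
    contrapose! hq2
    field_simp at hq2
    linear_combination hq2
  have hd : ∀ p : Fin (n + 1), lam * q ^ (-(p : ℤ)) ≠ 0 := fun p =>
    mul_ne_zero hlam (zpow_ne_zero _ hq0)
  refine ⟨isUnit_diagonal.mpr (Pi.isUnit_iff.mpr fun p => (hd p).isUnit), ?_, ?_, ?_⟩
  · exact diagonal_mul_mul_inv_diagonal_eq_smul hd fun i j h =>
      weight_eq_mul_weight_of_cyclic_succ hq0 hqm (cyclic_succ_of_ME_ne_zero h)
  · refine diagonal_mul_mul_inv_diagonal_eq_smul hd fun i j h => ?_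
    rw [weight_eq_mul_weight_of_cyclic_succ hq0 hqm (cyclic_succ_of_MF_ne_zero h),
      inv_mul_cancel_left₀ hq0]
  · rw [ME_mul_MF hqm, MF_mul_ME, diagonal_sub, MK, inv_diagonal_eq_diagonal_inv hd,
      diagonal_pow, diagonal_pow, diagonal_sub, ← diagonal_smul]
    exact congrArg diagonal (funext fun p => cCoeff_succ_sub_cCoeff hq0 hqq p)

theorem injective_lam_mul_zpow_neg (hq : IsPrimitiveRoot q m) (hlam : lam ≠ 0) :
    Function.Injective fun p : Fin m => lam * q ^ (-(p : ℤ)) := by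
  intro i j h
  have h' := mul_left_cancel₀ hlam h
  rw [_root_.zpow_neg, _root_.zpow_neg, _root_.inv_inj, zpow_natCast, zpow_natCast] at h'
  exact Fin.ext (hq.pow_inj i.isLt j.isLt h')

variable {W : Submodule ℂ (Fin (n + 1) → ℂ)}

theorem single_zero_mem_of_ME_mulVec_mem (hE : ∀ v ∈ W, ME q lam α β (n + 1) *ᵥ v ∈ W)
    (hc : ∀ i : Fin n, cCoeff q lam α β (i + 1) ≠ 0) (p : Fin (n + 1))
    (hp : Pi.single p 1 ∈ W) : Pi.single 0 1 ∈ W := by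
  induction p using Fin.induction with
  | zero => exact hp
  | succ i ih =>
    have h := hE _ hp
    rw [ME_mulVec_single_succ, mul_one, W.single_mem_iff_single_one_mem (hc i)] at h
    exact ih h

theorem single_mem_of_MF_mulVec_mem (hF : ∀ v ∈ W, MF α (n + 1) *ᵥ v ∈ W)
    (h0 : Pi.single 0 1 ∈ W) (p : Fin (n + 1)) : Pi.single p 1 ∈ W := by
  induction p using Fin.induction with
  | zero => exact h0
  | succ i ih => simpa only [MF_mulVec_single_castSucc] using hF _ ih

theorem InvariantSub.eq_bot_or_eq_top (hq : IsPrimitiveRoot q (n + 1)) (hlam : lam ≠ 0)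
    (hc : ∀ i : Fin n, cCoeff q lam α β (i + 1) ≠ 0)
    (hW : InvariantSub (MK q lam (n + 1)) (ME q lam α β (n + 1)) (MF α (n + 1)) W) :
    W = ⊥ ∨ W = ⊤ := by
  obtain ⟨hK, hE, hF⟩ := hW
  refine or_iff_not_imp_left.mpr fun hne => ?_
  obtain ⟨p, hp⟩ :=
    W.exists_single_mem_of_diagonal_mulVec_mem (injective_lam_mul_zpow_neg hq hlam) hK hne
  exact W.eq_top_of_forall_single_mem
    (single_mem_of_MF_mulVec_mem hF (single_zero_mem_of_ME_mulVec_mem hE hc p hp))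

end Module

/-- If `c_p ≠ 0` for all `1 ≤ p ≤ m−1`, then `M(λ, α, β)` is an irreducible representation
of `U_q(sl(2))` of dimension `m`. -/
theorem stmt14 (m : ℕ) (hm : 3 ≤ m) (q : ℂ) (hq : IsPrimitiveRoot q m)
    (lam α β : ℂ) (hlam : lam ≠ 0)
    (hc : ∀ p : ℕ, 1 ≤ p → p ≤ m - 1 → cCoeff q lam α β p ≠ 0) :
    IsIrrep q (MK q lam m) (ME q lam α β m) (MF α m) := by
  obtain ⟨n, rfl⟩ : ∃ n, m = n + 1 := ⟨m - 1, by omega⟩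
  have hq2 : q ^ 2 ≠ 1 := hq.pow_ne_one_of_pos_of_lt two_ne_zero (by omega)
  refine ⟨isRep_MK_ME_MF hq.pow_eq_one hq2 hlam, by omega, fun W hW => ?_⟩
  exact hW.eq_bot_or_eq_top hq hlam fun i => hc (i + 1) (by omega) (by omega)
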